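/- Let n ≥ 2 and let μ₁, μ₂ be probability measures on (Fin n → ℕ), each exchangeable (invariant under the maps c ↦ c ∘ σ for all permutations σ of Fin n), and let μ = μ₁.prod μ₂. Define the Rand index R(c₁, c₂) = (n choose 2)⁻¹ · Σ_{i < j} [𝟙(c₁ i = c₁ j ∧ c₂ i = c₂ j) + 𝟙(c₁ i ≠ c₁ j ∧ c₂ i ≠ c₂ j)]. Then the expected Rand index under independence equals ER^⊥ = μ₁{c | c 0 = c 1} · μ₂{c | c 0 = c 1} + μ₁{c | c 0 ≠ c 1} · μ₂{c | c 0 ≠ c 1}; that is, ∫ R dμ = Σ_{κ=1}^{2} ℙ(K₁₂ = κ) ℙ(K₂₂ = κ), where K_{ℓ2} ∈ {1,2} is the number of clusters at layer ℓ among subjects 0 and 1. -/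

import Mathlib

open MeasureTheory Finset

/-!
The Rand index is the average over pairs `i < j` of the indicator that the two partitions agree
on `{i, j}`. Under the product measure this agreement event is the disjoint union of the product
sets `{c i = c j} × {c i = c j}` and `{c i ≠ c j} × {c i ≠ c j}`, so its probability is the sum of
products in `ER^⊥` computed for the pair `(i, j)`. Exchangeability makes the law of `(c i, c j)`
the same for all pairs of distinct indices, since a permutation carries any such pair to any
other; hence all `n.choose 2` terms equal the one for `(0, 1)`.
-/

section Exchangeable

variable {ι α : Type*} [MeasurableSpace α]

def Exchangeable (μ : Measure (ι → α)) : Prop :=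
  ∀ σ : Equiv.Perm ι, μ.map (fun c : ι → α => c ∘ σ) = μ

variable {μ : Measure (ι → α)}

theorem Exchangeable.map_pair_eq (hμ : Exchangeable μ) {i j i' j' : ι}
    (hij : i ≠ j) (hij' : i' ≠ j') :
    μ.map (fun c : ι → α => (c i, c j)) = μ.map (fun c : ι → α => (c i', c j')) := by
  obtain ⟨σ, hσ⟩ := Equiv.Perm.exists_extending_pair ![i', j'] ![i, j]
    (injective_pair_iff_ne.mpr hij') (injective_pair_iff_ne.mpr hij)
  have hσi' : σ i' = i := hσ 0
  have hσj' : σ j' = j := hσ 1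
  have hσ_measurable : Measurable (fun c : ι → α => c ∘ σ) := by fun_prop
  calc μ.map (fun c : ι → α => (c i, c j))
      = (μ.map (fun c : ι → α => c ∘ σ)).map (fun c : ι → α => (c i', c j')) := by
        rw [Measure.map_map (by fun_prop) hσ_measurable]
        congr 1
        ext c <;> simp [hσi', hσj']
    _ = μ.map (fun c : ι → α => (c i', c j')) := by rw [hμ σ]

theorem Exchangeable.measure_preimage_pair_eq (hμ : Exchangeable μ) {i j i' j' : ι}
    (hij : i ≠ j) (hij' : i' ≠ j') {s : Set (α × α)} (hs : MeasurableSet s) :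
    μ ((fun c : ι → α => (c i, c j)) ⁻¹' s) = μ ((fun c : ι → α => (c i', c j')) ⁻¹' s) := by
  rw [← Measure.map_apply (by fun_prop) hs, ← Measure.map_apply (by fun_prop) hs,
    hμ.map_pair_eq hij hij']

theorem Exchangeable.measure_setOf_apply_eq [MeasurableEq α] (hμ : Exchangeable μ)
    {i j i' j' : ι} (hij : i ≠ j) (hij' : i' ≠ j') :
    μ {c | c i = c j} = μ {c | c i' = c j'} :=
  hμ.measure_preimage_pair_eq hij hij' measurableSet_diagonal

theorem Exchangeable.measure_setOf_apply_ne [MeasurableEq α] (hμ : Exchangeable μ)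
    {i j i' j' : ι} (hij : i ≠ j) (hij' : i' ≠ j') :
    μ {c | c i ≠ c j} = μ {c | c i' ≠ c j'} :=
  hμ.measure_preimage_pair_eq hij hij' measurableSet_diagonal.compl

end Exchangeable

theorem Finset.card_filter_fst_lt_snd {α : Type*} [Fintype α] [LinearOrder α] :
    #{x : α × α | x.1 < x.2} = (Fintype.card α).choose 2 := by
  rw [← univ_product_univ, card_product_filter_lt, card_univ]

section RandIndex

variable {ι α : Type*}

theorem measurableSet_setOf_apply_eq [MeasurableSpace α] [MeasurableEq α] (i j : ι) :
    MeasurableSet {c : ι → α | c i = c j} :=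
  measurableSet_eq_fun (by fun_prop) (by fun_prop)

theorem measurableSet_setOf_apply_ne [MeasurableSpace α] [MeasurableEq α] (i j : ι) :
    MeasurableSet {c : ι → α | c i ≠ c j} :=
  (measurableSet_setOf_apply_eq i j).compl

variable [DecidableEq α]

def pairAgreement (i j : ι) (p : (ι → α) × (ι → α)) : ℝ :=
  (if p.1 i = p.1 j ∧ p.2 i = p.2 j then 1 else 0) +
    (if p.1 i ≠ p.1 j ∧ p.2 i ≠ p.2 j then 1 else 0)

theorem pairAgreement_eq_indicator (i j : ι) :
    pairAgreement (α := α) i j =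
      ({c | c i = c j} ×ˢ {c | c i = c j}).indicator 1 +
        ({c | c i ≠ c j} ×ˢ {c | c i ≠ c j}).indicator 1 := by
  ext p
  simp [pairAgreement, Set.indicator_apply]

variable [MeasurableSpace α] [MeasurableEq α] (μ₁ μ₂ : Measure (ι → α))
  [IsFiniteMeasure μ₁] [IsFiniteMeasure μ₂] (i j : ι)

theorem integrable_pairAgreement : Integrable (pairAgreement i j) (μ₁.prod μ₂) := by
  have hEq := measurableSet_setOf_apply_eq (α := α) i j
  have hNe := measurableSet_setOf_apply_ne (α := α) i j
  rw [pairAgreement_eq_indicator]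
  exact ((integrable_const 1).indicator (hEq.prod hEq)).add
    ((integrable_const 1).indicator (hNe.prod hNe))

theorem integral_pairAgreement :
    ∫ p, pairAgreement i j p ∂(μ₁.prod μ₂) =
      μ₁.real {c | c i = c j} * μ₂.real {c | c i = c j} +
        μ₁.real {c | c i ≠ c j} * μ₂.real {c | c i ≠ c j} := by
  have hEq := measurableSet_setOf_apply_eq (α := α) i j
  have hNe := measurableSet_setOf_apply_ne (α := α) i j
  rw [pairAgreement_eq_indicator, integral_add' ((integrable_const 1).indicator (hEq.prod hEq))
      ((integrable_const 1).indicator (hNe.prod hNe)),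
    integral_indicator_one (hEq.prod hEq), integral_indicator_one (hNe.prod hNe),
    measureReal_prod_prod, measureReal_prod_prod]

variable {μ₁ μ₂ i j} in
theorem Exchangeable.integral_pairAgreement_eq (h₁ : Exchangeable μ₁) (h₂ : Exchangeable μ₂)
    {i' j' : ι} (hij : i ≠ j) (hij' : i' ≠ j') :
    ∫ p, pairAgreement i j p ∂(μ₁.prod μ₂) = ∫ p, pairAgreement i' j' p ∂(μ₁.prod μ₂) := by
  simp only [integral_pairAgreement, measureReal_def, h₁.measure_setOf_apply_eq hij hij',
    h₂.measure_setOf_apply_eq hij hij', h₁.measure_setOf_apply_ne hij hij',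
    h₂.measure_setOf_apply_ne hij hij']

end RandIndex

/-- Expected Rand index of two independent exchangeable random partitions:
`ER^⊥ = ℙ(K₁₂ = 1)ℙ(K₂₂ = 1) + ℙ(K₁₂ = 2)ℙ(K₂₂ = 2)`. -/
theorem stmt_12 (n : ℕ) (hn : 2 ≤ n)
    (μ₁ μ₂ : Measure (Fin n → ℕ)) [IsProbabilityMeasure μ₁] [IsProbabilityMeasure μ₂]
    (hexch₁ : ∀ σ : Equiv.Perm (Fin n),
      μ₁.map (fun c : Fin n → ℕ => c ∘ σ) = μ₁)
    (hexch₂ : ∀ σ : Equiv.Perm (Fin n),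
      μ₂.map (fun c : Fin n → ℕ => c ∘ σ) = μ₂) :
    ∫ p, ((n.choose 2 : ℝ)⁻¹ *
        ∑ q ∈ Finset.univ.filter (fun q : Fin n × Fin n => q.1 < q.2),
          ((if p.1 q.1 = p.1 q.2 ∧ p.2 q.1 = p.2 q.2 then (1 : ℝ) else 0) +
            (if p.1 q.1 ≠ p.1 q.2 ∧ p.2 q.1 ≠ p.2 q.2 then (1 : ℝ) else 0)))
        ∂(μ₁.prod μ₂) =
      (μ₁ {c | c ⟨0, by omega⟩ = c ⟨1, by omega⟩}).toReal *
          (μ₂ {c | c ⟨0, by omega⟩ = c ⟨1, by omega⟩}).toReal +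
        (μ₁ {c | c ⟨0, by omega⟩ ≠ c ⟨1, by omega⟩}).toReal *
          (μ₂ {c | c ⟨0, by omega⟩ ≠ c ⟨1, by omega⟩}).toReal := by
  have h01 : (⟨0, by omega⟩ : Fin n) ≠ ⟨1, by omega⟩ := by simp
  have hchoose : (n.choose 2 : ℝ) ≠ 0 := by exact_mod_cast (Nat.choose_pos hn).ne'
  have hpair : ∀ q ∈ ({q | q.1 < q.2} : Finset (Fin n × Fin n)),
      ∫ p, pairAgreement q.1 q.2 p ∂(μ₁.prod μ₂) =
        ∫ p, pairAgreement ⟨0, by omega⟩ ⟨1, by omega⟩ p ∂(μ₁.prod μ₂) := fun q hq =>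
    Exchangeable.integral_pairAgreement_eq hexch₁ hexch₂ (mem_filter.mp hq).2.ne h01
  change ∫ p, (n.choose 2 : ℝ)⁻¹ * ∑ q ∈ ({q | q.1 < q.2} : Finset (Fin n × Fin n)),
    pairAgreement q.1 q.2 p ∂(μ₁.prod μ₂) = _
  rw [integral_const_mul,
    integral_finsetSum _ fun q _ => integrable_pairAgreement μ₁ μ₂ q.1 q.2,
    sum_congr rfl hpair, sum_const, card_filter_fst_lt_snd,
    Fintype.card_fin, nsmul_eq_mul, inv_mul_cancel_left₀ hchoose, integral_pairAgreement]
  rfl
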